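/- arXiv:1711.00081 — 5 statements merged into one kernel-verified Lean document; each statement's English description precedes it below -/
import Mathlib

section
/- Let I be an instance of the two-machine flow shop with exact delays in which every delay is L₁ or L₂, with optimal makespan C*. Let J₁ = {j : l_j = L₁} and J₂ = {j : l_j = L₂}, and let σ₁, σ₂ be optimal schedules of the subinstances on J₁, J₂ respectively. Then the concatenated schedule σ = σ₁ ⊕ σ₂ is feasible for I and satisfies C_max(σ) ≤ 2·C*. -/
open Finset

/-- A job in the two-machine flow shop with exact delays:
first operation of length `a` on machine 1, exact delay `l`,
second operation of length `b` on machine 2. -/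
structure Job where
  a : ℝ
  l : ℝ
  b : ℝ

/-- Completion time of a job started at time `s`. -/
def Job.comp (jb : Job) (s : ℝ) : ℝ := s + jb.a + jb.l + jb.b

/-- Machine-1 operation interval. -/
def Job.m1 (jb : Job) (s : ℝ) : Set ℝ := Set.Ico s (s + jb.a)

/-- Machine-2 operation interval. -/
def Job.m2 (jb : Job) (s : ℝ) : Set ℝ :=
  Set.Ico (s + jb.a + jb.l) (s + jb.a + jb.l + jb.b)

/-- A schedule `s` is feasible for the jobs in `F` if on each machine the
operation intervals of distinct jobs are pairwise disjoint. -/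
def Feasible {J : Type*} (F : Finset J) (inst : J → Job) (s : J → ℝ) : Prop :=
  ∀ i ∈ F, ∀ j ∈ F, i ≠ j →
    Disjoint ((inst i).m1 (s i)) ((inst j).m1 (s j)) ∧
    Disjoint ((inst i).m2 (s i)) ((inst j).m2 (s j))

/-- Makespan: maximum completion time minus minimum start time. -/
noncomputable def Cmax {J : Type*} (F : Finset J) (hF : F.Nonempty)
    (inst : J → Job) (s : J → ℝ) : ℝ :=
  F.sup' hF (fun j => (inst j).comp (s j)) - F.inf' hF s

/-- 2-approximation: for an instance whose delays take only the values `L₁, L₂`,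
concatenating optimal schedules of the two subinstances `J₁ = {j : l j = L₁}`
and `J₂ = {j : l j = L₂}` gives a feasible schedule of makespan at most twice
the optimum `C*`. -/
theorem concatenation_two_approx {J : Type*} [DecidableEq J]
    (F : Finset J) (hF : F.Nonempty) (L₁ L₂ : ℝ) (hL : L₁ ≠ L₂)
    (inst : J → Job)
    (hnn : ∀ j ∈ F, 0 ≤ (inst j).a ∧ 0 ≤ (inst j).l ∧ 0 ≤ (inst j).b)
    (hdel : ∀ j ∈ F, (inst j).l = L₁ ∨ (inst j).l = L₂)
    (J₁ J₂ : Finset J)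
    (hJ₁ : J₁ = F.filter (fun j => (inst j).l = L₁))
    (hJ₂ : J₂ = F.filter (fun j => (inst j).l = L₂))
    (h1 : J₁.Nonempty) (h2 : J₂.Nonempty)
    (σ₁ σ₂ : J → ℝ)
    (hσ₁nn : ∀ j ∈ J₁, 0 ≤ σ₁ j) (hσ₁zero : ∃ j ∈ J₁, σ₁ j = 0)
    (hσ₂nn : ∀ j ∈ J₂, 0 ≤ σ₂ j) (hσ₂zero : ∃ j ∈ J₂, σ₂ j = 0)
    (hf1 : Feasible J₁ inst σ₁) (hf2 : Feasible J₂ inst σ₂)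
    (hopt1 : ∀ s' : J → ℝ, Feasible J₁ inst s' →
      Cmax J₁ h1 inst σ₁ ≤ Cmax J₁ h1 inst s')
    (hopt2 : ∀ s' : J → ℝ, Feasible J₂ inst s' →
      Cmax J₂ h2 inst σ₂ ≤ Cmax J₂ h2 inst s')
    (Cstar : ℝ) (sstar : J → ℝ) (hfstar : Feasible F inst sstar)
    (hCstar : Cmax F hF inst sstar = Cstar)
    (hopt : ∀ s' : J → ℝ, Feasible F inst s' → Cstar ≤ Cmax F hF inst s')
    (σ : J → ℝ)
    (hσ : ∀ j, σ j = if j ∈ J₁ then σ₁ j else σ₂ j + Cmax J₁ h1 inst σ₁) :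
    Feasible F inst σ ∧ Cmax F hF inst σ ≤ 2 * Cstar := by
  classical
  set C1 := Cmax J₁ h1 inst σ₁ with hC1def
  set C2 := Cmax J₂ h2 inst σ₂ with hC2def
  have hsub1 : J₁ ⊆ F := by rw [hJ₁]; exact Finset.filter_subset _ _
  have hsub2 : J₂ ⊆ F := by rw [hJ₂]; exact Finset.filter_subset _ _
  have hmem1 : ∀ j, j ∈ J₁ ↔ j ∈ F ∧ (inst j).l = L₁ := by
    intro j; rw [hJ₁]; simp
  have hmem2 : ∀ j, j ∈ J₂ ↔ j ∈ F ∧ (inst j).l = L₂ := by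
    intro j; rw [hJ₂]; simp
  have hdisj12 : ∀ j, j ∈ J₁ → j ∉ J₂ := by
    intro j hj hj2
    exact hL (((hmem1 j).mp hj).2 ▸ ((hmem2 j).mp hj2).2 ▸ rfl)
  have hcover : ∀ j ∈ F, j ∈ J₁ ∨ j ∈ J₂ := by
    intro j hj
    rcases hdel j hj with h | h
    · exact Or.inl ((hmem1 j).mpr ⟨hj, h⟩)
    · exact Or.inr ((hmem2 j).mpr ⟨hj, h⟩)
  have hinf1 : J₁.inf' h1 σ₁ = 0 := by
    apply le_antisymm
    · obtain ⟨j0, hj0, hz⟩ := hσ₁zero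
      exact hz ▸ Finset.inf'_le _ hj0
    · exact Finset.le_inf' _ _ hσ₁nn
  have hinf2 : J₂.inf' h2 σ₂ = 0 := by
    apply le_antisymm
    · obtain ⟨j0, hj0, hz⟩ := hσ₂zero
      exact hz ▸ Finset.inf'_le _ hj0
    · exact Finset.le_inf' _ _ hσ₂nn
  have hcomp1 : ∀ j ∈ J₁, σ₁ j + (inst j).a + (inst j).l + (inst j).b ≤ C1 := by
    intro j hj
    have h := Finset.le_sup' (fun j => (inst j).comp (σ₁ j)) hj
    rw [hC1def]; unfold Cmax; rw [hinf1]
    rw [sub_zero]; exact h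
  have hcomp2 : ∀ j ∈ J₂, σ₂ j + (inst j).a + (inst j).l + (inst j).b ≤ C2 := by
    intro j hj
    have h := Finset.le_sup' (fun j => (inst j).comp (σ₂ j)) hj
    rw [hC2def]; unfold Cmax; rw [hinf2]
    rw [sub_zero]; exact h
  have hC1nn : 0 ≤ C1 := by
    obtain ⟨j0, hj0, hz⟩ := hσ₁zero
    obtain ⟨ha, hl, hb⟩ := hnn j0 (hsub1 hj0)
    have h := hcomp1 j0 hj0
    rw [hz] at h; linarith
  have hC2nn : 0 ≤ C2 := by
    obtain ⟨j0, hj0, hz⟩ := hσ₂zero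
    obtain ⟨ha, hl, hb⟩ := hnn j0 (hsub2 hj0)
    have h := hcomp2 j0 hj0
    rw [hz] at h; linarith
  have hσ1 : ∀ j ∈ J₁, σ j = σ₁ j := by
    intro j hj; rw [hσ j, if_pos hj]
  have hσ2 : ∀ j ∈ J₂, σ j = σ₂ j + C1 := by
    intro j hj
    rw [hσ j, if_neg (fun h => hdisj12 j h hj)]
  -- shift preserves disjointness of Ico's
  have key2 : ∀ p q p' q' : ℝ, Disjoint (Set.Ico p q) (Set.Ico p' q') →
      Disjoint (Set.Ico (p + C1) (q + C1)) (Set.Ico (p' + C1) (q' + C1)) := by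
    intro p q p' q' h
    rw [Set.Ico_disjoint_Ico] at h ⊢
    simp only [min_le_iff, le_max_iff] at h ⊢
    rcases h with (h | h) | (h | h)
    · exact Or.inl (Or.inl (by linarith))
    · exact Or.inl (Or.inr (by linarith))
    · exact Or.inr (Or.inl (by linarith))
    · exact Or.inr (Or.inr (by linarith))
  have e : ∀ x y : ℝ, x + C1 + y = x + y + C1 := fun x y => by ring
  have hfeas : Feasible F inst σ := by
    intro i hi j hj hij
    have key : ∀ p q : J, p ∈ J₁ → q ∈ J₂ →
        Disjoint ((inst p).m1 (σ p)) ((inst q).m1 (σ q)) ∧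
        Disjoint ((inst p).m2 (σ p)) ((inst q).m2 (σ q)) := by
      intro p q hp hq
      obtain ⟨hap, hlp, hbp⟩ := hnn p (hsub1 hp)
      obtain ⟨haq, hlq, hbq⟩ := hnn q (hsub2 hq)
      have hp1 := hcomp1 p hp
      have hqnn := hσ₂nn q hq
      rw [hσ1 p hp, hσ2 q hq]
      constructor
      · unfold Job.m1
        rw [Set.Ico_disjoint_Ico]
        refine (min_le_left _ _).trans (le_trans ?_ (le_max_right _ _))
        linarith
      · unfold Job.m2
        rw [Set.Ico_disjoint_Ico]
        refine (min_le_left _ _).trans (le_trans ?_ (le_max_right _ _))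
        linarith
    rcases hcover i hi with hi1 | hi2 <;> rcases hcover j hj with hj1 | hj2
    · rw [hσ1 i hi1, hσ1 j hj1]; exact hf1 i hi1 j hj1 hij
    · exact key i j hi1 hj2
    · exact ⟨(key j i hj1 hi2).1.symm, (key j i hj1 hi2).2.symm⟩
    · rw [hσ2 i hi2, hσ2 j hj2]
      obtain ⟨hm1, hm2⟩ := hf2 i hi2 j hj2 hij
      simp only [Job.m1, Job.m2] at hm1 hm2 ⊢
      constructor
      · simp only [e]
        exact key2 _ _ _ _ hm1
      · simp only [e]
        exact key2 _ _ _ _ hm2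
  refine ⟨hfeas, ?_⟩
  -- optimum of subinstances is at most Cstar
  have hmono : ∀ (G : Finset J) (hG : G.Nonempty) (hGF : G ⊆ F) (s : J → ℝ),
      Cmax G hG inst s ≤ Cmax F hF inst s := by
    intro G hG hGF s
    unfold Cmax
    have h1' : G.sup' hG (fun j => (inst j).comp (s j)) ≤
        F.sup' hF (fun j => (inst j).comp (s j)) :=
      Finset.sup'_le _ _ fun j hj => Finset.le_sup' (fun j => (inst j).comp (s j)) (hGF hj)
    have h2' : F.inf' hF s ≤ G.inf' hG s :=
      Finset.le_inf' _ _ fun j hj => Finset.inf'_le _ (hGF hj)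
    linarith
  have hC1le : C1 ≤ Cstar := by
    have hfr : Feasible J₁ inst sstar := fun i hi j hj h =>
      hfstar i (hsub1 hi) j (hsub1 hj) h
    calc C1 ≤ Cmax J₁ h1 inst sstar := hopt1 sstar hfr
      _ ≤ Cmax F hF inst sstar := hmono J₁ h1 hsub1 sstar
      _ = Cstar := hCstar
  have hC2le : C2 ≤ Cstar := by
    have hfr : Feasible J₂ inst sstar := fun i hi j hj h =>
      hfstar i (hsub2 hi) j (hsub2 hj) h
    calc C2 ≤ Cmax J₂ h2 inst sstar := hopt2 sstar hfr
      _ ≤ Cmax F hF inst sstar := hmono J₂ h2 hsub2 sstar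
      _ = Cstar := hCstar
  have hinfF : F.inf' hF σ = 0 := by
    apply le_antisymm
    · obtain ⟨j0, hj0, hz⟩ := hσ₁zero
      have : σ j0 = 0 := by rw [hσ1 j0 hj0, hz]
      exact this ▸ Finset.inf'_le _ (hsub1 hj0)
    · refine Finset.le_inf' _ _ fun j hj => ?_
      rcases hcover j hj with h | h
      · rw [hσ1 j h]; exact hσ₁nn j h
      · rw [hσ2 j h]
        have := hσ₂nn j h
        linarith
  have hsupF : F.sup' hF (fun j => (inst j).comp (σ j)) ≤ C1 + C2 := by
    refine Finset.sup'_le _ _ fun j hj => ?_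
    rcases hcover j hj with h | h
    · have := hcomp1 j h
      simp only [Job.comp, hσ1 j h]
      linarith
    · have := hcomp2 j h
      simp only [Job.comp, hσ2 j h]
      linarith
  unfold Cmax
  rw [hinfF]
  linarith
end

section
/- Suppose there exists X ⊆ {1, …, m} with ∑_{k∈X} w_k = S, where ∑_{k=1}^{m} w_k = 2S. Then for the flow shop instance with jobs (w_k, 2R, w_k) for k = 1,…,m, plus big jobs (R, 0, R), (R, 2R, R), (0, 0, R−S), (R−S, 0, 0), (0, 0, R), (R, 0, 0), with R > 5S, there exists a feasible schedule σ with C_max(σ) ≤ 4R + 4S. -/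
open Finset

/-- The reduction instance from Partition: small jobs `(w k, 2R, w k)` and six big jobs. -/
noncomputable def redInst (m : ℕ) (w : Fin m → ℝ) (R S : ℝ) : Fin m ⊕ Fin 6 → Job :=
  fun i => match i with
  | Sum.inl k => ⟨w k, 2 * R, w k⟩
  | Sum.inr j => ![⟨R, 0, R⟩, ⟨R, 2 * R, R⟩, ⟨0, 0, R - S⟩,
                   ⟨R - S, 0, 0⟩, ⟨0, 0, R⟩, ⟨R, 0, 0⟩] j

/-- The full job set of the reduction instance is nonempty. -/
theorem redNonempty (m : ℕ) : (Finset.univ : Finset (Fin m ⊕ Fin 6)).Nonempty :=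
  ⟨Sum.inr 0, Finset.mem_univ _⟩
lemma disjIcoAux {a b c d : ℝ} (h : ∀ x : ℝ, a ≤ x → x < b → c ≤ x → x < d → False) :
    Disjoint (Set.Ico a b) (Set.Ico c d) := by
  rw [Set.disjoint_left]
  rintro x ⟨h1, h2⟩ ⟨h3, h4⟩
  exact h x h1 h2 h3 h4

noncomputable def pre {m : ℕ} (w : Fin m → ℕ) (T : Finset (Fin m)) (k : Fin m) : ℝ :=
  ∑ j ∈ T.filter (fun j => j < k), (w j : ℝ)

lemma pre_nonneg {m : ℕ} (w : Fin m → ℕ) (T : Finset (Fin m)) (k : Fin m) :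
    0 ≤ pre w T k :=
  Finset.sum_nonneg fun j _ => Nat.cast_nonneg _

lemma pre_le {m : ℕ} (w : Fin m → ℕ) (T : Finset (Fin m)) {k : Fin m} (hk : k ∈ T) :
    pre w T k + w k ≤ ∑ j ∈ T, (w j : ℝ) := by
  have hnot : k ∉ T.filter (fun j => j < k) := by simp
  have hsub : insert k (T.filter (fun j => j < k)) ⊆ T := by
    intro j hj
    rcases Finset.mem_insert.mp hj with h | h
    · exact h ▸ hk
    · exact (Finset.mem_filter.mp h).1
  have h2 := Finset.sum_le_sum_of_subset_of_nonneg hsub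
      (fun j _ _ => Nat.cast_nonneg (α := ℝ) (w j))
  rw [Finset.sum_insert hnot] at h2
  unfold pre; linarith

lemma pre_mono {m : ℕ} (w : Fin m → ℕ) (T : Finset (Fin m)) {k k' : Fin m}
    (hk : k ∈ T) (hkk : k < k') :
    pre w T k + w k ≤ pre w T k' := by
  have hnot : k ∉ T.filter (fun j => j < k) := by simp
  have hsub : insert k (T.filter (fun j => j < k)) ⊆ T.filter (fun j => j < k') := by
    intro j hj
    rcases Finset.mem_insert.mp hj with h | h
    · subst h; exact Finset.mem_filter.mpr ⟨hk, hkk⟩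
    · rcases Finset.mem_filter.mp h with ⟨h1, h2⟩
      exact Finset.mem_filter.mpr ⟨h1, h2.trans hkk⟩
  have h2 := Finset.sum_le_sum_of_subset_of_nonneg hsub
      (fun j _ _ => Nat.cast_nonneg (α := ℝ) (w j))
  rw [Finset.sum_insert hnot] at h2
  unfold pre; linarith

lemma vec6_0 {α : Type*} (a b c d e f : α) : ![a,b,c,d,e,f] 0 = a := rfl
lemma vec6_1 {α : Type*} (a b c d e f : α) : ![a,b,c,d,e,f] 1 = b := rfl
lemma vec6_2 {α : Type*} (a b c d e f : α) : ![a,b,c,d,e,f] 2 = c := rfl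
lemma vec6_3 {α : Type*} (a b c d e f : α) : ![a,b,c,d,e,f] 3 = d := rfl
lemma vec6_4 {α : Type*} (a b c d e f : α) : ![a,b,c,d,e,f] 4 = e := rfl
lemma vec6_5 {α : Type*} (a b c d e f : α) : ![a,b,c,d,e,f] 5 = f := rfl

lemma vec6_0' {α : Type*} (a b c d e f : α) (h : 0 < 6) : ![a,b,c,d,e,f] ⟨0,h⟩ = a := rfl
lemma vec6_1' {α : Type*} (a b c d e f : α) (h : 1 < 6) : ![a,b,c,d,e,f] ⟨1,h⟩ = b := rfl
lemma vec6_2' {α : Type*} (a b c d e f : α) (h : 2 < 6) : ![a,b,c,d,e,f] ⟨2,h⟩ = c := rfl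
lemma vec6_3' {α : Type*} (a b c d e f : α) (h : 3 < 6) : ![a,b,c,d,e,f] ⟨3,h⟩ = d := rfl
lemma vec6_4' {α : Type*} (a b c d e f : α) (h : 4 < 6) : ![a,b,c,d,e,f] ⟨4,h⟩ = e := rfl
lemma vec6_5' {α : Type*} (a b c d e f : α) (h : 5 < 6) : ![a,b,c,d,e,f] ⟨5,h⟩ = f := rfl

set_option maxHeartbeats 2000000 in
/-- (i) If some subset of the weights sums to `S`, the reduction instance
admits a feasible schedule of makespan at most `4R + 4S`. -/
theorem yes_instance_schedule (m S R : ℕ) (hS : 0 < S) (hR : 5 * S < R)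
    (w : Fin m → ℕ) (hsum : ∑ k, w k = 2 * S)
    (X : Finset (Fin m)) (hX : ∑ k ∈ X, w k = S) :
    ∃ s : Fin m ⊕ Fin 6 → ℝ,
      (∀ j, 0 ≤ s j) ∧
      Feasible Finset.univ (redInst m (fun k => (w k : ℝ)) R S) s ∧
      Cmax Finset.univ (redNonempty m) (redInst m (fun k => (w k : ℝ)) R S) s ≤
        4 * (R : ℝ) + 4 * S := by
  have hS1 : (1 : ℝ) ≤ S := by exact_mod_cast hS
  have hRS : 5 * (S : ℝ) < R := by exact_mod_cast hR
  have hR0 : (0 : ℝ) ≤ R := by linarith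
  have hXsum : ∑ j ∈ X, ((w j : ℝ)) = S := by exact_mod_cast hX
  have hYnat : ∑ j ∈ Xᶜ, w j = S := by
    have h := Finset.sum_add_sum_compl X w
    omega
  have hYsum : ∑ j ∈ Xᶜ, ((w j : ℝ)) = S := by exact_mod_cast hYnat
  have hw : ∀ k, (0 : ℝ) ≤ (w k : ℝ) := fun k => Nat.cast_nonneg _
  set σ : Fin m ⊕ Fin 6 → ℝ :=
    Sum.elim (fun k => if k ∈ X then 2 * pre w X k else 2 * (S : ℝ) + 2 * R + 2 * pre w Xᶜ k)
      ![2 * (S : ℝ) + R, 2 * S, R, 4 * S + 2 * R, 0, 3 * S + 3 * R] with hσ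
  have hσ0 : ∀ j, 0 ≤ σ j := by
    rintro (k | b)
    · simp only [hσ, Sum.elim_inl]
      split
      · have := pre_nonneg w X k; linarith
      · have := pre_nonneg w Xᶜ k; linarith
    · fin_cases b <;> simp [hσ, vec6_0, vec6_1, vec6_2, vec6_3, vec6_4, vec6_5, vec6_0', vec6_1', vec6_2', vec6_3', vec6_4', vec6_5'] <;> linarith
  refine ⟨σ, hσ0, ?_, ?_⟩
  · -- Feasibility
    have SS : ∀ k k' : Fin m, k ≠ k' →
        Disjoint ((redInst m (fun k => (w k : ℝ)) R S (Sum.inl k)).m1 (σ (Sum.inl k)))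
          ((redInst m (fun k => (w k : ℝ)) R S (Sum.inl k')).m1 (σ (Sum.inl k'))) ∧
        Disjoint ((redInst m (fun k => (w k : ℝ)) R S (Sum.inl k)).m2 (σ (Sum.inl k)))
          ((redInst m (fun k => (w k : ℝ)) R S (Sum.inl k')).m2 (σ (Sum.inl k'))) := by
      intro k k' hne
      simp only [hσ, Sum.elim_inl, redInst, Job.m1, Job.m2]
      by_cases hk : k ∈ X <;> by_cases hk' : k' ∈ X <;>
        simp only [if_pos, if_neg, hk, hk', if_true, if_false]
      · -- both in X
        rcases lt_or_gt_of_ne hne with h | h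
        · have hm := pre_mono w X hk h
          exact ⟨disjIcoAux (by intro x h1 h2 h3 h4; have := hw k; have := hw k'; linarith),
                 disjIcoAux (by intro x h1 h2 h3 h4; have := hw k; have := hw k'; linarith)⟩
        · have hm := pre_mono w X hk' h
          exact ⟨disjIcoAux (by intro x h1 h2 h3 h4; have := hw k; have := hw k'; linarith),
                 disjIcoAux (by intro x h1 h2 h3 h4; have := hw k; have := hw k'; linarith)⟩
      · -- k ∈ X, k' ∉ X
        have hb := pre_le w X hk
        rw [hXsum] at hb
        have h0 := pre_nonneg w Xᶜ k'
        have h0' := pre_nonneg w X k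
        exact ⟨disjIcoAux (by intro x h1 h2 h3 h4; have := hw k; have := hw k'; linarith),
               disjIcoAux (by intro x h1 h2 h3 h4; have := hw k; have := hw k'; linarith)⟩
      · -- k ∉ X, k' ∈ X
        have hb := pre_le w X hk'
        rw [hXsum] at hb
        have h0 := pre_nonneg w Xᶜ k
        have h0' := pre_nonneg w X k'
        exact ⟨disjIcoAux (by intro x h1 h2 h3 h4; have := hw k; have := hw k'; linarith),
               disjIcoAux (by intro x h1 h2 h3 h4; have := hw k; have := hw k'; linarith)⟩
      · -- both ∉ X
        have hkc : k ∈ Xᶜ := Finset.mem_compl.mpr hk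
        have hkc' : k' ∈ Xᶜ := Finset.mem_compl.mpr hk'
        rcases lt_or_gt_of_ne hne with h | h
        · have hm := pre_mono w Xᶜ hkc h
          exact ⟨disjIcoAux (by intro x h1 h2 h3 h4; have := hw k; have := hw k'; linarith),
                 disjIcoAux (by intro x h1 h2 h3 h4; have := hw k; have := hw k'; linarith)⟩
        · have hm := pre_mono w Xᶜ hkc' h
          exact ⟨disjIcoAux (by intro x h1 h2 h3 h4; have := hw k; have := hw k'; linarith),
                 disjIcoAux (by intro x h1 h2 h3 h4; have := hw k; have := hw k'; linarith)⟩
    have SB : ∀ (k : Fin m) (b : Fin 6),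
        Disjoint ((redInst m (fun k => (w k : ℝ)) R S (Sum.inl k)).m1 (σ (Sum.inl k)))
          ((redInst m (fun k => (w k : ℝ)) R S (Sum.inr b)).m1 (σ (Sum.inr b))) ∧
        Disjoint ((redInst m (fun k => (w k : ℝ)) R S (Sum.inl k)).m2 (σ (Sum.inl k)))
          ((redInst m (fun k => (w k : ℝ)) R S (Sum.inr b)).m2 (σ (Sum.inr b))) := by
      intro k b
      by_cases hk : k ∈ X
      · have hb := pre_le w X hk
        rw [hXsum] at hb
        have h0 := pre_nonneg w X k
        have hwk := hw k
        fin_cases b <;>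
          simp only [hσ, Sum.elim_inl, Sum.elim_inr, redInst, Job.m1, Job.m2, if_pos hk,
            vec6_0, vec6_1, vec6_2, vec6_3, vec6_4, vec6_5, vec6_0', vec6_1', vec6_2', vec6_3', vec6_4', vec6_5',
            
            Fin.isValue] <;>
          exact ⟨disjIcoAux (by intro x h1 h2 h3 h4; linarith),
                 disjIcoAux (by intro x h1 h2 h3 h4; linarith)⟩
      · have hkc : k ∈ Xᶜ := Finset.mem_compl.mpr hk
        have hb := pre_le w Xᶜ hkc
        rw [hYsum] at hb
        have h0 := pre_nonneg w Xᶜ k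
        have hwk := hw k
        fin_cases b <;>
          simp only [hσ, Sum.elim_inl, Sum.elim_inr, redInst, Job.m1, Job.m2, if_neg hk,
            vec6_0, vec6_1, vec6_2, vec6_3, vec6_4, vec6_5, vec6_0', vec6_1', vec6_2', vec6_3', vec6_4', vec6_5',
            
            Fin.isValue] <;>
          exact ⟨disjIcoAux (by intro x h1 h2 h3 h4; linarith),
                 disjIcoAux (by intro x h1 h2 h3 h4; linarith)⟩
    have BB : ∀ b b' : Fin 6, b ≠ b' →
        Disjoint ((redInst m (fun k => (w k : ℝ)) R S (Sum.inr b)).m1 (σ (Sum.inr b)))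
          ((redInst m (fun k => (w k : ℝ)) R S (Sum.inr b')).m1 (σ (Sum.inr b'))) ∧
        Disjoint ((redInst m (fun k => (w k : ℝ)) R S (Sum.inr b)).m2 (σ (Sum.inr b)))
          ((redInst m (fun k => (w k : ℝ)) R S (Sum.inr b')).m2 (σ (Sum.inr b'))) := by
      intro b b' hne
      fin_cases b <;> fin_cases b' <;> (try exact absurd rfl hne) <;>
        simp only [hσ, Sum.elim_inr, redInst, Job.m1, Job.m2,
          vec6_0, vec6_1, vec6_2, vec6_3, vec6_4, vec6_5, vec6_0', vec6_1', vec6_2', vec6_3', vec6_4', vec6_5',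
          
          Fin.isValue] <;>
        exact ⟨disjIcoAux (by intro x h1 h2 h3 h4; linarith),
               disjIcoAux (by intro x h1 h2 h3 h4; linarith)⟩
    rintro (k | b) - (k' | b') - hne
    · exact SS k k' (by simpa using hne)
    · exact SB k b'
    · exact ⟨(SB k' b).1.symm, (SB k' b).2.symm⟩
    · exact BB b b' (by simpa using hne)
  · -- Makespan
    have hsup : Finset.univ.sup' (redNonempty m)
        (fun j => (redInst m (fun k => (w k : ℝ)) R S j).comp (σ j)) ≤ 4 * (R : ℝ) + 4 * S := by
      apply Finset.sup'_le
      rintro (k | b) -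
      · simp only [hσ, Sum.elim_inl, redInst, Job.comp]
        by_cases hk : k ∈ X
        · have hb := pre_le w X hk
          rw [hXsum] at hb
          simp only [if_pos hk]
          linarith
        · have hkc : k ∈ Xᶜ := Finset.mem_compl.mpr hk
          have hb := pre_le w Xᶜ hkc
          rw [hYsum] at hb
          simp only [if_neg hk]
          linarith
      · fin_cases b <;>
          simp only [hσ, Sum.elim_inr, redInst, Job.comp,
            vec6_0, vec6_1, vec6_2, vec6_3, vec6_4, vec6_5, vec6_0', vec6_1', vec6_2', vec6_3', vec6_4', vec6_5',
            
            Fin.isValue] <;>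
          linarith
    have hinf : (0 : ℝ) ≤ Finset.univ.inf' (redNonempty m) σ :=
      Finset.le_inf' _ _ fun j _ => hσ0 j
    unfold Cmax
    linarith
end

section
/- In any feasible schedule σ of the reduction instance with C_max(σ) ≤ 4R + 4S (where R > 5S and all small-job processing times sum to 2S), the two operations of job m+1 (data (R, 0, R)) are executed exactly within the 2R-length delay interval of job m+2 (data (R, 2R, R)); i.e., the first operation of job m+1 starts exactly when the first operation of job m+2 finishes, and the second operation of job m+1 finishes exactly when the second operation of job m+2 starts. -/
open Finset

/-- In any feasible schedule of makespan at most `4R + 4S`, both operations of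
job `m+1` (data `(R,0,R)`, index `Sum.inr 0`) are executed exactly within the
delay interval of job `m+2` (data `(R,2R,R)`, index `Sum.inr 1`): the first
operation of `m+1` starts exactly when the first operation of `m+2` finishes,
and the second operation of `m+1` finishes exactly when the second operation
of `m+2` starts. -/
theorem initial_construction (m S R : ℕ) (hS : 0 < S) (hR : 5 * S < R)
    (w : Fin m → ℕ) (hsum : ∑ k, w k = 2 * S)
    (s : Fin m ⊕ Fin 6 → ℝ)
    (hfeas : Feasible Finset.univ (redInst m (fun k => (w k : ℝ)) R S) s)
    (hlen : Cmax Finset.univ (redNonempty m) (redInst m (fun k => (w k : ℝ)) R S) s ≤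
      4 * (R : ℝ) + 4 * S) :
    s (Sum.inr 0) = s (Sum.inr 1) + R ∧
    s (Sum.inr 0) + 2 * (R : ℝ) = s (Sum.inr 1) + 3 * R := by
  have hSr : (0:ℝ) < S := by exact_mod_cast hS
  have hRr : 5 * (S:ℝ) < R := by exact_mod_cast hR
  have hR0 : (0:ℝ) < R := by linarith
  set s0 := s (Sum.inr 0) with hs0
  set s1 := s (Sum.inr 1) with hs1
  -- job data
  have hJ0 : redInst m (fun k => (w k : ℝ)) R S (Sum.inr 0) = ⟨R, 0, R⟩ := by
    simp [redInst]
  have hJ1 : redInst m (fun k => (w k : ℝ)) R S (Sum.inr 1) = ⟨R, 2 * R, R⟩ := by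
    simp [redInst]
  -- makespan bounds
  have hsup : ∀ j, (redInst m (fun k => (w k : ℝ)) R S j).comp (s j) ≤
      Finset.univ.sup' (redNonempty m) (fun j => (redInst m (fun k => (w k : ℝ)) R S j).comp (s j)) :=
    fun j => Finset.le_sup' (f := fun j => (redInst m (fun k => (w k : ℝ)) R S j).comp (s j)) (Finset.mem_univ j)
  have hinf : ∀ j, Finset.univ.inf' (redNonempty m) s ≤ s j :=
    fun j => Finset.inf'_le _ (Finset.mem_univ j)
  have hlen' : ∀ i j, (redInst m (fun k => (w k : ℝ)) R S i).comp (s i) - s j ≤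
      4 * (R:ℝ) + 4 * S := by
    intro i j
    have h1 := hsup i
    have h2 := hinf j
    have := hlen
    unfold Cmax at this
    linarith
  have hA := hlen' (Sum.inr 0) (Sum.inr 1)
  have hB := hlen' (Sum.inr 1) (Sum.inr 0)
  rw [hJ0] at hA
  rw [hJ1] at hB
  simp only [Job.comp] at hA hB
  -- disjointness between jobs inr 0 and inr 1
  have hd := hfeas (Sum.inr 0) (Finset.mem_univ _) (Sum.inr 1) (Finset.mem_univ _) (by simp)
  rw [hJ0, hJ1] at hd
  obtain ⟨hd1, hd2⟩ := hd
  simp only [Job.m1, Job.m2, Set.Ico_disjoint_Ico] at hd1 hd2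
  rw [min_le_iff] at hd1 hd2
  rcases hd1 with h | h
  · -- s0 + R ≤ max s0 s1
    rcases le_max_iff.mp h with h' | h'
    · linarith
    · -- s0 + R ≤ s1 : contradiction with makespan
      exfalso
      change s0 + R ≤ s1 at h'
      linarith
  · rcases le_max_iff.mp h with h' | h'
    · -- s1 + R ≤ s0
      change s1 + R ≤ s0 at h'
      rcases hd2 with h2 | h2
      · rcases le_max_iff.mp h2 with h2' | h2'
        · -- s0 + 2R ≤ s0 + R : false
          exfalso; change s0 + R + 0 + R ≤ s0 + R + 0 at h2'; linarith
        · -- s0 + 2R ≤ s1 + 3R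
          change s0 + R + 0 + R ≤ s1 + R + 2 * R at h2'
          constructor <;> linarith
      · rcases le_max_iff.mp h2 with h2' | h2'
        · -- s1 + 4R ≤ s0 + R : contradiction with makespan
          exfalso; change s1 + R + 2 * R + R ≤ s0 + R + 0 at h2'; linarith
        · exfalso; change s1 + R + 2 * R + R ≤ s1 + R + 2 * R at h2'; linarith
    · change s1 + R ≤ s1 at h'
      exfalso; linarith
end

section
/- Consider small jobs 1, …, p with data (w_i, 2R, w_i), where w₁ ≤ ⋯ ≤ w_p and ∑ w_i = S ≤ R. If their first operations are scheduled consecutively without idle time on machine 1 in order p, p−1, …, 1 (nonincreasing lengths) within an interval of length S, then their second operations (each starting exactly 2R after the first completes) are pairwise non-overlapping on machine 2 and are all contained in an interval of length S + w_p ≤ 2S. -/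
/-- Small jobs `(w i, 2R, w i)` with `w` nondecreasing and `∑ w i = S ≤ R`,
whose first operations form a consecutive block on machine 1 (in order of
nondecreasing length, job `i` starting at `s i = T + ∑_{j<i} w j`): then their
second operations (each starting exactly `2R` after the first completes) are
pairwise disjoint on machine 2 and all fit in an interval of length
`S + w (p−1) ≤ 2S`. -/
theorem small_jobs_second_ops (p : ℕ) (hp : 1 ≤ p) (R S T : ℝ) (hT : 0 ≤ T)
    (w : ℕ → ℝ) (hnn : ∀ i, 0 ≤ w i) (hmono : Monotone w)
    (hsum : ∑ i ∈ Finset.range p, w i = S) (hSR : S ≤ R)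
    (s : ℕ → ℝ) (hs : ∀ i, s i = T + ∑ j ∈ Finset.range i, w j) :
    (∀ i < p, ∀ j < p, i ≠ j →
      Disjoint (Set.Ico (s i + w i + 2 * R) (s i + 2 * w i + 2 * R))
               (Set.Ico (s j + w j + 2 * R) (s j + 2 * w j + 2 * R))) ∧
    (∀ i < p, Set.Ico (s i + w i + 2 * R) (s i + 2 * w i + 2 * R) ⊆
      Set.Icc (T + 2 * R) (T + 2 * R + S + w (p - 1))) ∧
    S + w (p - 1) ≤ 2 * S := by
  have hsub : ∀ i j : ℕ, i ≤ j → (∑ k ∈ Finset.range i, w k) ≤ ∑ k ∈ Finset.range j, w k := by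
    intro i j hij
    exact Finset.sum_le_sum_of_subset_of_nonneg (Finset.range_subset_range.2 hij)
      (fun k _ _ => hnn k)
  have key : ∀ i j : ℕ, i < j →
      (∑ k ∈ Finset.range i, w k) + 2 * w i ≤ (∑ k ∈ Finset.range j, w k) + w j := by
    intro i j hij
    have h1 : (∑ k ∈ Finset.range (i+1), w k) ≤ ∑ k ∈ Finset.range j, w k := hsub _ _ hij
    rw [Finset.sum_range_succ] at h1
    have h2 : w i ≤ w j := hmono hij.le
    linarith
  refine ⟨?_, ?_, ?_⟩
  · intro i hi j hj hij
    rw [Set.disjoint_left]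
    intro x hx hx'
    simp only [Set.mem_Ico, hs] at hx hx'
    rcases lt_or_gt_of_ne hij with h | h
    · have := key i j h
      linarith [hx.1, hx.2, hx'.1, hx'.2]
    · have := key j i h
      linarith [hx.1, hx.2, hx'.1, hx'.2]
  · intro i hi x hx
    simp only [Set.mem_Ico, hs] at hx
    have h0 : 0 ≤ ∑ k ∈ Finset.range i, w k :=
      Finset.sum_nonneg fun k _ => hnn k
    have h1 : (∑ k ∈ Finset.range (i+1), w k) ≤ S := by
      rw [← hsum]; exact hsub _ _ hi
    rw [Finset.sum_range_succ] at h1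
    have h2 : w i ≤ w (p - 1) := hmono (by omega)
    constructor <;> [linarith [hx.1, hnn i]; linarith [hx.2]]
  · have h1 : (∑ k ∈ Finset.range p, w k) = S := hsum
    have h2 : w (p - 1) ≤ S := by
      rw [← hsum]
      exact Finset.single_le_sum (fun k _ => hnn k) (Finset.mem_range.2 (by omega))
    linarith
end

section
/- In the two-machine flow shop with exact delays, if all jobs have the same delay L, then the optimal makespan equals L plus the optimal makespan of the corresponding instance with all delays equal to 0 (the two-machine no-wait flow shop). -/
open Finset

lemma feas_iff {J : Type*} (F : Finset J) (L : ℝ) (instL inst0 : J → Job)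
    (hrel : ∀ j ∈ F, (instL j).a = (inst0 j).a ∧ (instL j).b = (inst0 j).b ∧
      (instL j).l = L ∧ (inst0 j).l = 0) (s : J → ℝ) :
    Feasible F instL s ↔ Feasible F inst0 s := by
  have key : ∀ i ∈ F, ∀ j ∈ F,
      (Disjoint ((instL i).m1 (s i)) ((instL j).m1 (s j)) ↔
        Disjoint ((inst0 i).m1 (s i)) ((inst0 j).m1 (s j))) ∧
      (Disjoint ((instL i).m2 (s i)) ((instL j).m2 (s j)) ↔
        Disjoint ((inst0 i).m2 (s i)) ((inst0 j).m2 (s j))) := by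
    intro i hi j hj
    obtain ⟨hai, hbi, hli, h0i⟩ := hrel i hi
    obtain ⟨haj, hbj, hlj, h0j⟩ := hrel j hj
    constructor
    · rw [Job.m1, Job.m1, Job.m1, Job.m1, hai, haj]
    · rw [Job.m2, Job.m2, Job.m2, Job.m2, hai, haj, hbi, hbj, hli, hlj, h0i, h0j,
        add_zero, add_zero, Set.Ico_disjoint_Ico, Set.Ico_disjoint_Ico]
      have e1 : ∀ u v : ℝ, u + L + v = u + v + L := fun u v => by ring
      rw [e1, e1, min_add_add_right, max_add_add_right, add_le_add_iff_right]
  constructor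
  · intro h i hi j hj hij
    exact ⟨(key i hi j hj).1.mp (h i hi j hj hij).1, (key i hi j hj).2.mp (h i hi j hj hij).2⟩
  · intro h i hi j hj hij
    exact ⟨(key i hi j hj).1.mpr (h i hi j hj hij).1, (key i hi j hj).2.mpr (h i hi j hj hij).2⟩

/-- When all delays equal a common constant `L`, the optimal makespan equals
`L` plus the optimal makespan of the corresponding no-wait (delay-0) instance. -/
theorem common_delay_optimum {J : Type*} (F : Finset J) (hF : F.Nonempty)
    (L : ℝ) (hL : 0 ≤ L) (instL inst0 : J → Job)
    (hrel : ∀ j ∈ F, (instL j).a = (inst0 j).a ∧ (instL j).b = (inst0 j).b ∧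
      (instL j).l = L ∧ (inst0 j).l = 0)
    (hnn : ∀ j ∈ F, 0 ≤ (instL j).a ∧ 0 ≤ (instL j).b)
    (hex : ∃ s : J → ℝ, Feasible F instL s) :
    sInf {C : ℝ | ∃ s : J → ℝ, Feasible F instL s ∧ Cmax F hF instL s = C} =
      L + sInf {C : ℝ | ∃ s : J → ℝ, Feasible F inst0 s ∧ Cmax F hF inst0 s = C} := by
  set S0 : Set ℝ := {C : ℝ | ∃ s : J → ℝ, Feasible F inst0 s ∧ Cmax F hF inst0 s = C} with hS0
  -- Cmax relation
  have hCmax : ∀ s : J → ℝ, Cmax F hF instL s = L + Cmax F hF inst0 s := by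
    intro s
    have hcomp : ∀ j ∈ F, (instL j).comp (s j) = (inst0 j).comp (s j) + L := by
      intro j hj
      obtain ⟨ha, hb, hl, h0⟩ := hrel j hj
      simp [Job.comp, ha, hb, hl, h0]; ring
    have hsup : F.sup' hF (fun j => (instL j).comp (s j)) =
        F.sup' hF (fun j => (inst0 j).comp (s j)) + L := by
      rw [Finset.comp_sup'_eq_sup'_comp hF (fun x => x + L)
        (fun x y => (max_add_add_right x y L).symm)]
      exact Finset.sup'_congr hF rfl hcomp
    rw [Cmax, Cmax, hsup]; ring
  -- set equality
  have hset : {C : ℝ | ∃ s : J → ℝ, Feasible F instL s ∧ Cmax F hF instL s = C} =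
      (fun C => L + C) '' S0 := by
    ext C
    constructor
    · rintro ⟨s, hs, rfl⟩
      exact ⟨Cmax F hF inst0 s, ⟨s, (feas_iff F L instL inst0 hrel s).mp hs, rfl⟩, (hCmax s).symm⟩
    · rintro ⟨C0, ⟨s, hs, rfl⟩, rfl⟩
      exact ⟨s, (feas_iff F L instL inst0 hrel s).mpr hs, hCmax s⟩
  rw [hset]
  have hne : S0.Nonempty := by
    obtain ⟨s, hs⟩ := hex
    exact ⟨Cmax F hF inst0 s, s, (feas_iff F L instL inst0 hrel s).mp hs, rfl⟩
  have hbdd : BddBelow S0 := by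
    refine ⟨0, fun C hC => ?_⟩
    obtain ⟨s, _, rfl⟩ := hC
    obtain ⟨j0, hj0, hj0eq⟩ := Finset.exists_mem_eq_inf' hF s
    have h1 : (inst0 j0).comp (s j0) ≤
        F.sup' hF (fun j => (inst0 j).comp (s j)) :=
      Finset.le_sup' (fun j => (inst0 j).comp (s j)) hj0
    rw [Job.comp] at h1
    obtain ⟨ha, hb⟩ := hnn j0 hj0
    obtain ⟨ha', hb', _, h0⟩ := hrel j0 hj0
    rw [Cmax, hj0eq]
    have : s j0 ≤ s j0 + (inst0 j0).a + (inst0 j0).l + (inst0 j0).b := by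
      rw [h0]; rw [ha'] at ha; rw [hb'] at hb; linarith
    linarith
  have := (OrderIso.addLeft L).map_csInf' hne hbdd
  simp only [OrderIso.addLeft_apply] at this
  rw [← this]
end
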